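/- There exists a universal constant c > 0 such that for every positive integer n there exist functions h_1,…,h_n : 𝒞_n → ℝ satisfying 2^{−n} Σ_{δ∈𝒞_n} ‖Σ_{i=1}^n δ_i 𝔈_i h_i‖_{L_1(𝒞_n;ℝ)} ≥ c √n · 2^{−n} Σ_{δ∈𝒞_n} ‖Σ_{i=1}^n δ_i h_i‖_{L_1(𝒞_n;ℝ)}, and the right-hand side is strictly positive. -/

import Mathlib

noncomputable section

open Finset

/-- The sign `±1` attached to a boolean coordinate of the discrete cube. -/
def sgn (b : Bool) : ℝ := if b then 1 else -1

variable {X : Type*} [NormedAddCommGroup X] [NormedSpace ℝ X]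

/-- `L_p` norm of `f : 𝒞_n → X` with respect to the uniform probability measure. -/
def cubeLpNorm (n : ℕ) (p : ℝ) (f : (Fin n → Bool) → X) : ℝ :=
  (((2 : ℝ) ^ n)⁻¹ * ∑ ε : Fin n → Bool, ‖f ε‖ ^ p) ^ (1 / p)

/-- Conditional expectation given the coordinates in `S`: average of `f η` over all
`η` agreeing with `ε` on `S`. -/
def cubeCondExp (n : ℕ) (S : Finset (Fin n)) (f : (Fin n → Bool) → X) :
    (Fin n → Bool) → X := fun ε =>
  ((2 : ℝ) ^ (n - S.card))⁻¹ •
    ∑ η ∈ univ.filter (fun η : Fin n → Bool => ∀ j ∈ S, η j = ε j), f η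

/-- The set of the first `i` coordinates (`0`-based). -/
def firstIdx (n i : ℕ) : Finset (Fin n) := univ.filter fun j => (j : ℕ) < i

/-- `𝔈_i`: conditioning on the first `i` coordinates. -/
def Ei (n i : ℕ) (f : (Fin n → Bool) → X) : (Fin n → Bool) → X :=
  cubeCondExp n (firstIdx n i) f

/-- `𝔈_i^π`: conditioning on the coordinates `π(1),…,π(i)`. -/
def Epi (n : ℕ) (π : Equiv.Perm (Fin n)) (i : ℕ) (f : (Fin n → Bool) → X) :
    (Fin n → Bool) → X :=
  cubeCondExp n ((firstIdx n i).image π) f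

/-- `∂_i`: the `i`-th discrete partial derivative. -/
def cubeDeriv (n : ℕ) (i : Fin n) (f : (Fin n → Bool) → X) : (Fin n → Bool) → X :=
  fun ε => (2 : ℝ)⁻¹ • (f ε - f (Function.update ε i (!(ε i))))

/-- `X` satisfies the hypercube Stein inequality with constant `s` for exponent `p`. -/
def SteinIneq (X : Type*) [NormedAddCommGroup X] [NormedSpace ℝ X] (p s : ℝ) : Prop :=
  ∀ m : ℕ, 0 < m → ∀ (π : Equiv.Perm (Fin m)) (g : Fin m → (Fin m → Bool) → X),
    (((2 : ℝ) ^ m)⁻¹ * ∑ δ : Fin m → Bool,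
        (cubeLpNorm m p fun ε => ∑ i : Fin m, sgn (δ i) • Epi m π ((i : ℕ) + 1) (g i) ε) ^ p) ^ (1 / p)
      ≤ s * (((2 : ℝ) ^ m)⁻¹ * ∑ δ : Fin m → Bool,
        (cubeLpNorm m p fun ε => ∑ i : Fin m, sgn (δ i) • g i ε) ^ p) ^ (1 / p)

/-- `X` satisfies the hypercube UMD⁻ inequality with constant `b` for exponent `p`. -/
def UMDminusIneq (X : Type*) [NormedAddCommGroup X] [NormedSpace ℝ X] (p b : ℝ) : Prop :=
  ∀ m : ℕ, 0 < m → ∀ (π : Equiv.Perm (Fin m)) (d : Fin m → (Fin m → Bool) → X),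
    (∀ i : Fin m, Epi m π ((i : ℕ) + 1) (d i) = d i ∧ Epi m π (i : ℕ) (d i) = 0) →
    cubeLpNorm m p (fun ε => ∑ i : Fin m, d i ε)
      ≤ b * (((2 : ℝ) ^ m)⁻¹ * ∑ δ : Fin m → Bool,
        (cubeLpNorm m p fun ε => ∑ i : Fin m, sgn (δ i) • d i ε) ^ p) ^ (1 / p)

/-- The Walsh function `w_A`. -/
def walsh (n : ℕ) (A : Finset (Fin n)) (ε : Fin n → Bool) : ℝ := ∏ i ∈ A, sgn (ε i)

/-- The Walsh coefficient `f̂(A)`. -/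
def walshCoeff (n : ℕ) (f : (Fin n → Bool) → X) (A : Finset (Fin n)) : X :=
  ((2 : ℝ) ^ n)⁻¹ • ∑ ε : Fin n → Bool, walsh n A ε • f ε

/-- `Δ⁻¹∂_i f = Σ_{A ∋ i} |A|⁻¹ f̂(A) w_A`. -/
def invLapDeriv (n : ℕ) (i : Fin n) (f : (Fin n → Bool) → X) : (Fin n → Bool) → X :=
  fun ε => ∑ A ∈ univ.filter (fun A : Finset (Fin n) => i ∈ A),
    ((A.card : ℝ)⁻¹ * walsh n A ε) • walshCoeff n f A

/-!
Take every `hᵢ` equal to the `L₁`-normalized point mass `e` at the all-`true` vertex. Then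
`∑ δᵢ hᵢ = (∑ δᵢ) e`, whose average `L₁` norm is `𝔼|∑ δᵢ| ≤ √n`. On the other side,
`𝔈_{i+1} e (ε) = 2^{i+1}` if the first `i + 1` coordinates of `ε` are `true` and `0` otherwise.
For fixed `ε` these values grow geometrically, so flipping the sign of the largest one shows that
the `δ`-average of `|∑ δᵢ 𝔈_{i+1} e (ε)|` is at least half of `∑ᵢ 𝔈_{i+1} e (ε)`, a function of mean
`n`. The left side is therefore at least `n / 2 ≥ (√n / 2) ·` (right side).
-/

lemma sgn_not (b : Bool) : sgn (!b) = -sgn b := by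
  cases b <;> norm_num [sgn]

lemma sgn_mul_self (b : Bool) : sgn b * sgn b = 1 := by
  cases b <;> norm_num [sgn]

section Signs

variable {ι : Type*} [DecidableEq ι]

def flipAt (i : ι) : Equiv.Perm (ι → Bool) :=
  Function.Involutive.toPerm (fun δ => Function.update δ i (!δ i)) fun δ => by
    simp [Function.update_idem, Function.update_eq_self]

@[simp] lemma flipAt_apply_self (i : ι) (δ : ι → Bool) : flipAt i δ i = !δ i :=
  Function.update_self ..

@[simp] lemma flipAt_apply_of_ne {i j : ι} (h : j ≠ i) (δ : ι → Bool) : flipAt i δ j = δ j :=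
  Function.update_of_ne h ..

variable [Fintype ι]

lemma sum_sgn_mul_sgn (i j : ι) :
    ∑ δ : ι → Bool, sgn (δ i) * sgn (δ j) = if i = j then 2 ^ Fintype.card ι else 0 := by
  split_ifs with hij
  · subst hij
    simp [sgn_mul_self]
  · have hflip := Equiv.sum_comp (flipAt i) fun δ : ι → Bool => sgn (δ i) * sgn (δ j)
    simp only [flipAt_apply_self, flipAt_apply_of_ne (Ne.symm hij), sgn_not, neg_mul,
      sum_neg_distrib] at hflip
    linarith

lemma sum_sq_sum_sgn :
    ∑ δ : ι → Bool, (∑ i, sgn (δ i)) ^ 2 = Fintype.card ι * 2 ^ Fintype.card ι := by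
  simp_rw [sq, sum_mul_sum]
  rw [sum_comm]
  simp_rw [sum_comm (s := (univ : Finset (ι → Bool))), sum_sgn_mul_sgn]
  simp

lemma sum_abs_sum_sgn_le :
    ∑ δ : ι → Bool, |∑ i, sgn (δ i)| ≤ 2 ^ Fintype.card ι * √(Fintype.card ι) := by
  have hcs := sq_sum_le_card_mul_sum_sq (s := univ) (f := fun δ : ι → Bool => |∑ i, sgn (δ i)|)
  simp only [sq_abs, sum_sq_sum_sgn, card_univ, Fintype.card_fun, Fintype.card_bool] at hcs
  refine (abs_le_of_sq_le_sq' ?_ (by positivity)).2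
  rw [mul_pow, Real.sq_sqrt (by positivity)]
  push_cast at hcs
  linarith

lemma sum_abs_sum_sgn_pos [Nonempty ι] : 0 < ∑ δ : ι → Bool, |∑ i, sgn (δ i)| := by
  refine lt_of_lt_of_le ?_ (single_le_sum (fun δ _ => abs_nonneg _) (mem_univ fun _ => true))
  simp [sgn, Fintype.card_pos]

variable {X : Type*} [NormedAddCommGroup X] [NormedSpace ℝ X]

/-- Pair `δ` with `flipAt t δ`: the two signed sums differ by `± 2 • x t`. -/
lemma pow_card_mul_norm_le_sum_norm_sum_sgn_smul (x : ι → X) (t : ι) :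
    2 ^ Fintype.card ι * ‖x t‖ ≤ ∑ δ : ι → Bool, ‖∑ i, sgn (δ i) • x i‖ := by
  have hflip := Equiv.sum_comp (flipAt t) fun δ : ι → Bool => ‖∑ i, sgn (δ i) • x i‖
  have hdiff (δ : ι → Bool) :
      ∑ i, sgn (δ i) • x i - ∑ i, sgn (flipAt t δ i) • x i = (2 * sgn (δ t)) • x t := by
    rw [← sum_sub_distrib, sum_eq_single t]
    · simp [sgn_not]; module
    · intro i _ hi; simp [flipAt_apply_of_ne hi]
    · simp
  have hpair (δ : ι → Bool) :
      2 * ‖x t‖ ≤ ‖∑ i, sgn (δ i) • x i‖ + ‖∑ i, sgn (flipAt t δ i) • x i‖ := by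
    calc 2 * ‖x t‖ = ‖(2 * sgn (δ t)) • x t‖ := by
          rw [norm_smul, norm_mul, Real.norm_eq_abs, abs_of_pos two_pos, Real.norm_eq_abs,
            show |sgn (δ t)| = 1 by cases δ t <;> norm_num [sgn], mul_one]
      _ ≤ _ := hdiff δ ▸ norm_sub_le _ _
  have := sum_le_sum fun δ (_ : δ ∈ univ) => hpair δ
  rw [sum_add_distrib, hflip, ← mul_sum] at this
  simp only [sum_const, card_univ, Fintype.card_fun, Fintype.card_bool,
    nsmul_eq_mul] at this
  push_cast at this
  linarith

end Signs

lemma card_filter_forall_mem_eq {ι : Type*} [Fintype ι] [DecidableEq ι] (S : Finset ι)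
    (η : ι → Bool) [DecidablePred fun ε : ι → Bool => ∀ j ∈ S, η j = ε j] :
    #{ε : ι → Bool | ∀ j ∈ S, η j = ε j} = 2 ^ (Fintype.card ι - #S) := by
  have hpi : ({ε : ι → Bool | ∀ j ∈ S, η j = ε j} : Finset _)
      = Fintype.piFinset fun j => if j ∈ S then {η j} else univ := by
    ext ε
    simp only [mem_filter, mem_univ, true_and, Fintype.mem_piFinset]
    refine forall_congr' fun j => ?_
    split_ifs with hj
    · simp only [hj, forall_const, mem_singleton]
      exact eq_comm
    · simp [hj]
  simp only [hpi, Fintype.card_piFinset, apply_ite card, card_singleton, card_univ,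
    Fintype.card_bool]
  rw [prod_ite, prod_const_one, prod_const, one_mul, filter_not, card_sdiff]
  simp

lemma cubeLpNorm_one {E : Type*} [NormedAddCommGroup E] (n : ℕ) (f : (Fin n → Bool) → E) :
    cubeLpNorm n 1 f = ((2 : ℝ) ^ n)⁻¹ * ∑ ε, ‖f ε‖ := by
  simp [cubeLpNorm]

lemma sum_cubeCondExp (n : ℕ) (S : Finset (Fin n)) (f : (Fin n → Bool) → X) :
    ∑ ε, cubeCondExp n S f ε = ∑ ε, f ε := by
  simp only [cubeCondExp, ← smul_sum]
  rw [sum_comm' (s' := fun η => {ε | ∀ j ∈ S, η j = ε j}) (t' := univ) (by simp)]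
  simp_rw [sum_const, card_filter_forall_mem_eq, Fintype.card_fin, ← Nat.cast_smul_eq_nsmul ℝ,
    smul_sum, smul_smul]
  push_cast
  simp

lemma cubeCondExp_single (n : ℕ) (S : Finset (Fin n)) (a : Fin n → Bool) (x : X)
    (ε : Fin n → Bool) :
    cubeCondExp n S (Pi.single a x) ε
      = if ∀ j ∈ S, a j = ε j then ((2 : ℝ) ^ (n - #S))⁻¹ • x else 0 := by
  simp only [cubeCondExp, sum_pi_single', mem_filter, mem_univ, true_and]
  split_ifs <;> simp

lemma card_firstIdx {n k : ℕ} (hk : k ≤ n) : #(firstIdx n k) = k := by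
  simp [firstIdx, Fin.card_filter_val_lt, hk]

lemma sum_range_ite_lt_two_pow_succ_le (n M : ℕ) :
    ∑ i ∈ range n, (if i < M then (2 : ℝ) ^ (i + 1) else 0) ≤ 2 ^ (M + 1) - 2 := by
  have hgeom : ∑ i ∈ range M, (2 : ℝ) ^ (i + 1) = 2 ^ (M + 1) - 2 := by
    induction M with
    | zero => norm_num
    | succ M ih => rw [sum_range_succ, ih]; ring
  rw [← sum_filter, ← hgeom]
  exact sum_le_sum_of_subset_of_nonneg (fun i hi => by simp_all) fun _ _ _ => by positivity

def leadingTrueLen {n : ℕ} (ε : Fin n → Bool) : ℕ :=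
  Nat.findGreatest (fun m => ∀ j ∈ firstIdx n m, ε j = true) n

lemma leadingTrueLen_le {n : ℕ} (ε : Fin n → Bool) : leadingTrueLen ε ≤ n :=
  Nat.findGreatest_le n

lemma le_leadingTrueLen_iff {n k : ℕ} (hk : k ≤ n) (ε : Fin n → Bool) :
    k ≤ leadingTrueLen ε ↔ ∀ j ∈ firstIdx n k, ε j = true := by
  refine ⟨fun h j hj => ?_, fun h => Nat.le_findGreatest hk h⟩
  refine Nat.findGreatest_spec (P := fun m => ∀ j ∈ firstIdx n m, ε j = true) (m := 0)
    (Nat.zero_le n) (fun j hj => by simp [firstIdx] at hj) j ?_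
  rw [firstIdx, mem_filter] at hj ⊢
  exact ⟨mem_univ j, hj.2.trans_le h⟩

/-- The factor `2 ^ n` normalizes the `L₁` norm to one. -/
def spike (n : ℕ) : (Fin n → Bool) → ℝ := Pi.single (fun _ => true) (2 ^ n)

lemma spike_nonneg (n : ℕ) (ε : Fin n → Bool) : 0 ≤ spike n ε := by
  unfold spike; rw [Pi.single_apply]; positivity

lemma sum_spike (n : ℕ) : ∑ ε, spike n ε = 2 ^ n := by
  simp [spike, sum_pi_single']

lemma Ei_succ_spike {n : ℕ} (i : Fin n) (ε : Fin n → Bool) :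
    Ei n ((i : ℕ) + 1) (spike n) ε
      = if (i : ℕ) < leadingTrueLen ε then 2 ^ ((i : ℕ) + 1) else 0 := by
  have hcond : (∀ j ∈ firstIdx n ((i : ℕ) + 1), true = ε j) ↔ (i : ℕ) < leadingTrueLen ε := by
    rw [Nat.lt_iff_add_one_le, le_leadingTrueLen_iff i.isLt]
    simp only [eq_comm]
  rw [Ei, spike, cubeCondExp_single, card_firstIdx i.isLt]
  simp only [hcond, smul_eq_mul]
  field_simp
  split_ifs
  · rw [div_eq_iff (by positivity), ← pow_add]
    congr 1
    omega
  · rfl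

/-- The values `𝔈_{i+1} spike (ε) = 2^{i+1}` for `i < leadingTrueLen ε` grow geometrically, so
their sum is at most twice the largest one, which the Rademacher average dominates. -/
lemma sum_Ei_spike_le {n : ℕ} (ε : Fin n → Bool) :
    ∑ i : Fin n, Ei n ((i : ℕ) + 1) (spike n) ε
      ≤ 2 * (((2 : ℝ) ^ n)⁻¹ * ∑ δ : Fin n → Bool,
          ‖∑ i : Fin n, sgn (δ i) • Ei n ((i : ℕ) + 1) (spike n) ε‖) := by
  simp_rw [Ei_succ_spike]
  set M := leadingTrueLen ε
  have hsum : ∑ i : Fin n, (if (i : ℕ) < M then (2 : ℝ) ^ ((i : ℕ) + 1) else 0)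
      ≤ 2 ^ (M + 1) - 2 :=
    (Fin.sum_univ_eq_sum_range (fun i => if i < M then (2 : ℝ) ^ (i + 1) else 0) n).trans_le
      (sum_range_ite_lt_two_pow_succ_le n M)
  rcases Nat.eq_zero_or_pos M with hM | hM
  · simp only [hM, Nat.not_lt_zero, if_false, sum_const_zero]
    positivity
  · have hMn : M - 1 < n := by have := leadingTrueLen_le ε; omega
    have hflip := pow_card_mul_norm_le_sum_norm_sum_sgn_smul
      (fun i : Fin n => if (i : ℕ) < M then (2 : ℝ) ^ ((i : ℕ) + 1) else 0) ⟨M - 1, hMn⟩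
    simp only [Fintype.card_fin, show M - 1 < M by omega, if_true, Nat.sub_add_cancel hM,
      Real.norm_eq_abs, abs_pow, abs_two] at hflip
    have hmax : (2 : ℝ) ^ M ≤ ((2 : ℝ) ^ n)⁻¹ * ∑ δ : Fin n → Bool,
        ‖∑ i : Fin n, sgn (δ i) • if (i : ℕ) < M then (2 : ℝ) ^ ((i : ℕ) + 1) else 0‖ := by
      rw [le_inv_mul_iff₀ (by positivity)]
      simpa only [Real.norm_eq_abs] using hflip
    linarith [pow_succ (2 : ℝ) M]

lemma half_le_avg_cubeLpNorm_Ei_spike (n : ℕ) :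
    (n : ℝ) / 2 ≤ ((2 : ℝ) ^ n)⁻¹ * ∑ δ : Fin n → Bool,
      cubeLpNorm n 1 fun ε => ∑ i : Fin n, sgn (δ i) • Ei n ((i : ℕ) + 1) (spike n) ε := by
  have hmean (i : Fin n) : ∑ ε, Ei n ((i : ℕ) + 1) (spike n) ε = 2 ^ n := by
    rw [Ei, sum_cubeCondExp, sum_spike]
  calc (n : ℝ) / 2 = ((2 : ℝ) ^ n)⁻¹ * (∑ ε, ∑ i : Fin n, Ei n ((i : ℕ) + 1) (spike n) ε) / 2 := by
        rw [sum_comm, sum_congr rfl fun i _ => hmean i, sum_const, card_univ, Fintype.card_fin,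
          nsmul_eq_mul]
        field_simp
    _ ≤ ((2 : ℝ) ^ n)⁻¹ * ∑ ε, ((2 : ℝ) ^ n)⁻¹ * ∑ δ : Fin n → Bool,
          ‖∑ i : Fin n, sgn (δ i) • Ei n ((i : ℕ) + 1) (spike n) ε‖ := by
        rw [div_le_iff₀ two_pos, mul_assoc, mul_comm _ (2 : ℝ)]
        gcongr _ * ?_
        rw [mul_sum]
        exact sum_le_sum fun ε _ => sum_Ei_spike_le ε
    _ = _ := by
        simp_rw [cubeLpNorm_one, ← mul_sum]
        rw [sum_comm]

lemma avg_cubeLpNorm_spike (n : ℕ) :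
    ((2 : ℝ) ^ n)⁻¹ * ∑ δ : Fin n → Bool,
        cubeLpNorm n 1 (fun ε => ∑ i : Fin n, sgn (δ i) • spike n ε)
      = ((2 : ℝ) ^ n)⁻¹ * ∑ δ : Fin n → Bool, |∑ i : Fin n, sgn (δ i)| := by
  congr 1
  refine sum_congr rfl fun δ _ => ?_
  simp_rw [cubeLpNorm_one, ← sum_smul, smul_eq_mul, norm_mul, Real.norm_eq_abs,
    abs_of_nonneg (spike_nonneg n _), ← mul_sum, sum_spike]
  field_simp

/-- Dualized Stein example: there is a universal `c > 0` such that for every `n` there are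
`h₁,…,hₙ : 𝒞_n → ℝ` with
`2⁻ⁿ Σ_δ ‖Σᵢ δᵢ𝔈ᵢhᵢ‖_{L₁} ≥ c√n · 2⁻ⁿ Σ_δ ‖Σᵢ δᵢhᵢ‖_{L₁} > 0`. -/
theorem stein_example_L1_dual :
    ∃ c : ℝ, 0 < c ∧ ∀ n : ℕ, 0 < n →
      ∃ h : Fin n → (Fin n → Bool) → ℝ,
        (((2 : ℝ) ^ n)⁻¹ * ∑ δ : Fin n → Bool,
            cubeLpNorm n 1 fun ε => ∑ i : Fin n, sgn (δ i) • Ei n ((i : ℕ) + 1) (h i) ε)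
          ≥ c * Real.sqrt n * (((2 : ℝ) ^ n)⁻¹ * ∑ δ : Fin n → Bool,
            cubeLpNorm n 1 fun ε => ∑ i : Fin n, sgn (δ i) • h i ε) ∧
        0 < ((2 : ℝ) ^ n)⁻¹ * ∑ δ : Fin n → Bool,
            cubeLpNorm n 1 fun ε => ∑ i : Fin n, sgn (δ i) • h i ε := by
  refine ⟨1 / 2, one_half_pos, fun n hn => ⟨fun _ => spike n, ?_⟩⟩
  have : Nonempty (Fin n) := ⟨⟨0, hn⟩⟩
  rw [avg_cubeLpNorm_spike]
  have hsqrt : √(n : ℝ) * √n = n := Real.mul_self_sqrt n.cast_nonneg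
  have hupper : ((2 : ℝ) ^ n)⁻¹ * ∑ δ : Fin n → Bool, |∑ i : Fin n, sgn (δ i)| ≤ √n := by
    rw [inv_mul_le_iff₀ (by positivity)]
    simpa using sum_abs_sum_sgn_le (ι := Fin n)
  refine ⟨?_, by have := sum_abs_sum_sgn_pos (ι := Fin n); positivity⟩
  calc 1 / 2 * √n * (((2 : ℝ) ^ n)⁻¹ * ∑ δ : Fin n → Bool, |∑ i : Fin n, sgn (δ i)|)
      ≤ 1 / 2 * √n * √n := by gcongr
    _ = n / 2 := by rw [mul_assoc, hsqrt]; ring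
    _ ≤ _ := half_le_avg_cubeLpNorm_Ei_spike n
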